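/- Contraction of the quantum hockey-stick divergence under the depolarizing channel (Lemma 3): Let n be a nonempty finite type with d := Fintype.card n, let ρ, ρ' : Matrix n n ℂ be density matrices, let p ∈ [0,1] and γ ≥ 1. With E_p(σ) := (1 - p) • σ + (p/d) • (1 : Matrix n n ℂ), we have Re(Tr((E_p(ρ) - γ • E_p(ρ'))₊)) ≤ max(0, (1 - γ) * p / d + (1 - p) * Re(Tr((ρ - γ • ρ')₊))). -/

import Mathlib

open Matrix
open scoped ComplexOrder

/-- The positive part of a matrix, given by the continuous functional calculus
applied to `fun x => max x 0` (for a Hermitian matrix this replaces each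
eigenvalue `x` in the spectral decomposition by `max x 0`). -/
noncomputable def matPosPart {n : Type*} [Fintype n] [DecidableEq n]
    (A : Matrix n n ℂ) : Matrix n n ℂ :=
  cfc (fun x : ℝ => max x 0) A

/-- The depolarizing channel with parameter `p` on `Matrix n n ℂ`. -/
noncomputable def depolarize {n : Type*} [Fintype n] [DecidableEq n]
    (p : ℝ) (σ : Matrix n n ℂ) : Matrix n n ℂ :=
  (1 - p) • σ + (p / (Fintype.card n : ℝ)) • (1 : Matrix n n ℂ)

/-!
With `B := ρ - γ • ρ'`, the depolarized difference is the affine image `(1 - p) • B + s • 1`,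
`s := (1 - γ) p / d ≤ 0`, so both positive parts are functions of `B` and their traces are sums
over the eigenvalues `λᵢ` of `B`. The claim becomes the scalar inequality
`∑ᵢ max ((1 - p) λᵢ + s) 0 ≤ max 0 (s + (1 - p) ∑ᵢ max λᵢ 0)`: if every summand on the left
vanishes it is trivial, otherwise the shift `s` is absorbed by one positive summand.
-/

namespace Matrix.IsHermitian

variable {n 𝕜 : Type*} [Fintype n] [DecidableEq n] [RCLike 𝕜] {A : Matrix n n 𝕜}

lemma trace_cfc (hA : A.IsHermitian) (f : ℝ → ℝ) :
    (cfc f A).trace = ∑ i, (f (hA.eigenvalues i) : 𝕜) := by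
  rw [hA.cfc_eq, IsHermitian.cfc, Unitary.conjStarAlgAut_apply, trace_mul_comm, ← mul_assoc,
    Unitary.coe_star_mul_self, one_mul, trace_diagonal]
  rfl

lemma cfc_const_mul_add_const (hA : A.IsHermitian) (c s : ℝ) :
    cfc (fun x : ℝ => c * x + s) A = c • A + s • (1 : Matrix n n 𝕜) := by
  rw [cfc_add A (c * ·) (fun _ => s), cfc_const_mul_id c A, cfc_const s A,
    Algebra.algebraMap_eq_smul_one]

lemma matPosPart_smul_add_smul_one {A : Matrix n n ℂ} (hA : A.IsHermitian) (c s : ℝ) :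
    matPosPart (c • A + s • (1 : Matrix n n ℂ)) = cfc (fun x : ℝ => max (c * x + s) 0) A := by
  rw [← hA.cfc_const_mul_add_const, matPosPart, ← cfc_comp' (max · 0) (c * · + s) A]

end Matrix.IsHermitian

lemma depolarize_sub_smul_depolarize {n : Type*} [Fintype n] [DecidableEq n]
    (p γ : ℝ) (ρ ρ' : Matrix n n ℂ) :
    depolarize p ρ - γ • depolarize p ρ' =
      (1 - p) • (ρ - γ • ρ') + ((1 - γ) * p / Fintype.card n) • (1 : Matrix n n ℂ) := by
  rw [depolarize, depolarize, mul_div_assoc, sub_mul, one_mul]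
  module

lemma sum_max_mul_add_le {ι : Type*} [Fintype ι] (l : ι → ℝ) {c s : ℝ} (hc : 0 ≤ c)
    (hs : s ≤ 0) : ∑ i, max (c * l i + s) 0 ≤ max 0 (s + c * ∑ i, max (l i) 0) := by
  classical
  have hterm (i : ι) : max (c * l i + s) 0 ≤ c * max (l i) 0 := by
    rw [mul_max_of_nonneg _ _ hc, mul_zero]
    exact max_le_max (by linarith) le_rfl
  by_cases hpos : ∃ j, 0 < c * l j + s
  · obtain ⟨j, hj⟩ := hpos
    refine le_max_of_le_right ?_
    have hj' : max (c * l j + s) 0 ≤ s + c * max (l j) 0 := by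
      rw [max_eq_left hj.le]
      linarith [mul_le_mul_of_nonneg_left (le_max_left (l j) 0) hc]
    rw [← Finset.add_sum_erase _ _ (Finset.mem_univ j), Finset.mul_sum,
      ← Finset.add_sum_erase _ _ (Finset.mem_univ j), ← add_assoc]
    exact add_le_add hj' (Finset.sum_le_sum fun i _ => hterm i)
  · simp only [not_exists, not_lt] at hpos
    refine le_max_of_le_left (Finset.sum_nonpos fun i _ => ?_)
    exact (max_eq_right (hpos i)).le

theorem quantum_hockeyStick_depolarize_le
    {n : Type*} [Fintype n] [DecidableEq n]
    (ρ ρ' : Matrix n n ℂ)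
    (hρ : ρ.IsHermitian)
    (hρ' : ρ'.IsHermitian)
    (p γ : ℝ) (hp0 : 0 ≤ p) (hp1 : p ≤ 1) (hγ : 1 ≤ γ) :
    (matPosPart (depolarize p ρ - γ • depolarize p ρ')).trace.re
      ≤ max 0 ((1 - γ) * p / (Fintype.card n : ℝ)
          + (1 - p) * (matPosPart (ρ - γ • ρ')).trace.re) := by
  have hB : (ρ - γ • ρ').IsHermitian := hρ.sub (hρ'.smul (.all γ))
  have hs : (1 - γ) * p / Fintype.card n ≤ 0 :=
    div_nonpos_of_nonpos_of_nonneg (mul_nonpos_of_nonpos_of_nonneg (by linarith) hp0)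
      (Nat.cast_nonneg _)
  rw [depolarize_sub_smul_depolarize, hB.matPosPart_smul_add_smul_one, matPosPart,
    hB.trace_cfc, hB.trace_cfc]
  simp only [Complex.re_sum]
  exact sum_max_mul_add_le _ (by linarith) hs
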